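/- Let λ be a nonzero real number and m a positive integer. For every n ≥ 0, the fully degenerate Dowling polynomials are expressed in terms of the fully degenerate Bell polynomials by d_{m,λ}(n,x) = Σ_{k=0}^{n} { Σ_{j=k}^{n} S_{1,λ}(j,k) W_{m,λ}(n,j) } φ_{k,λ}(x) as polynomials in x. -/

import Mathlib

open Nat PowerSeries Finset

noncomputable section

/-- λ-falling factorial (x)_{n,λ} = x(x−λ)···(x−(n−1)λ). -/
def dfall (l x : ℝ) (n : ℕ) : ℝ := ∏ i ∈ range n, (x - i * l)

/-- degenerate exponential e_λ^x(t) = Σ (x)_{n,λ} t^n/n! as a formal power series. -/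
def degExp (l x : ℝ) : PowerSeries ℝ := PowerSeries.mk fun n => dfall l x n / n !

/-- degenerate logarithm log_λ(1+t) = Σ_{n≥1} (∏_{j=1}^{n−1}(λ−j)) t^n/n!. -/
def degLog (l : ℝ) : PowerSeries ℝ :=
  PowerSeries.mk fun n => if n = 0 then 0 else (∏ j ∈ range (n - 1), (l - (j + 1))) / n !

/-- composition Σ_k a_k f^k, valid when f has zero constant term. -/
def psComp (a : ℕ → ℝ) (f : PowerSeries ℝ) : PowerSeries ℝ :=
  PowerSeries.mk fun n => ∑ k ∈ range (n + 1), a k * PowerSeries.coeff n (f ^ k)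

/-- e_λ^x(f), the degenerate exponential composed with f (f with zero constant term). -/
def degExpComp (l x : ℝ) (f : PowerSeries ℝ) : PowerSeries ℝ :=
  psComp (fun k => dfall l x k / k !) f

/-- degenerate Stirling numbers of the second kind. -/
def dS2 (l : ℝ) (n k : ℕ) : ℝ :=
  (n ! : ℝ) / k ! * PowerSeries.coeff n ((degExp l 1 - 1) ^ k)

/-- degenerate Stirling numbers of the first kind. -/
def dS1 (l : ℝ) (n k : ℕ) : ℝ :=
  (n ! : ℝ) / k ! * PowerSeries.coeff n (degLog l ^ k)

/-- (signed) Stirling numbers of the first kind: coefficients of x(x-1)···(x-n+1). -/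
def sS1 (n k : ℕ) : ℝ := (descPochhammer ℝ n).coeff k

/-- fully degenerate Bell polynomial φ_{n,λ}(x). -/
def dBell (l : ℝ) (n : ℕ) (x : ℝ) : ℝ := ∑ k ∈ range (n + 1), dS2 l n k * dfall l x k

/-- degenerate Whitney numbers of the second kind. -/
def dW (m : ℕ) (l : ℝ) (n k : ℕ) : ℝ :=
  (n ! : ℝ) / k ! *
    PowerSeries.coeff n (degExp l 1 * ((degExp l (m : ℝ) - 1) * PowerSeries.C (R := ℝ) (1 / m)) ^ k)

/-- fully degenerate Dowling polynomial d_{m,λ}(n,x). -/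
def dDowling (m : ℕ) (l : ℝ) (n : ℕ) (x : ℝ) : ℝ :=
  ∑ k ∈ range (n + 1), dW m l n k * dfall l x k

/-- division of a power series by t (coefficient shift). -/
def divT (f : PowerSeries ℝ) : PowerSeries ℝ :=
  PowerSeries.mk fun n => PowerSeries.coeff (n + 1) f

/-- degenerate Bernoulli polynomials β_{n,λ}(x): (t/(e_λ(t)−1)) e_λ^x(t) = Σ β_{n,λ}(x) tⁿ/n!. -/
def dBernoulliPoly (l : ℝ) (n : ℕ) (x : ℝ) : ℝ :=
  (n ! : ℝ) * PowerSeries.coeff n ((divT (degExp l 1 - 1))⁻¹ * degExp l x)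

/-- the λ-falling factorial polynomial (x)_{k,λ}. -/
def dfallPoly (l : ℝ) (k : ℕ) : Polynomial ℝ :=
  ∏ i ∈ range k, (Polynomial.X - Polynomial.C (i * l))

/-- degenerate poly-Bell polynomials B^{(r)}_{n,λ}(x). -/
def dPolyBell (r : ℤ) (l : ℝ) (n : ℕ) (x : ℝ) : ℝ :=
  (n ! : ℝ) * PowerSeries.coeff n
    (divT (psComp (fun k => if k = 0 then 0 else dfall l 1 k / ((k - 1)! * (k : ℝ) ^ r))
        (degLog l)) *
      (divT (degExp l 1 - 1))⁻¹ * degExp l x)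

/-- degenerate Bernoulli polynomials of the second kind b_{n,λ}(x). -/
def dBern2 (l : ℝ) (n : ℕ) (x : ℝ) : ℝ :=
  (n ! : ℝ) *
    PowerSeries.coeff n ((divT (degLog l))⁻¹ * PowerSeries.mk fun j => dfall 1 x j / j !)


/-! With `F = e_λ(t) - 1` and `L = log_λ(1 + t)`, the equations `(1 + λt) e_λ' = e_λ` and
`(1 + t) L' = 1 + λL` combine by the chain rule into `(1 + t) G' = G` for `G = e_λ(L)`;
since `G(0) = 1`, this forces `G = 1 + t`, i.e. `F(L(t)) = t`. Comparing coefficients in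
`F(L)^i = t^i` gives the orthogonality `∑ₖ S_{1,λ}(j,k) S_{2,λ}(k,i) = δᵢⱼ`, hence
`(x)_{j,λ} = ∑ₖ S_{1,λ}(j,k) φ_{k,λ}(x)`; substituting this into `d_{m,λ}(n,x)` and
exchanging the two sums gives the theorem. -/

section PowerSeriesFacts

variable {R : Type*} [CommRing R]

lemma coeff_pow_eq_zero_of_lt {f : R⟦X⟧} (hf : constantCoeff f = 0) {n k : ℕ} (h : n < k) :
    coeff n (f ^ k) = 0 := by
  obtain ⟨g, rfl⟩ := X_dvd_iff.mpr hf
  rw [mul_pow, coeff_X_pow_mul', if_neg (by omega)]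

lemma coeff_subst_eq_sum_range {f b : R⟦X⟧} (hb : constantCoeff b = 0) (n : ℕ) :
    coeff n (f.subst b) = ∑ k ∈ range (n + 1), coeff k f * coeff n (b ^ k) := by
  rw [coeff_subst' (HasSubst.of_constantCoeff_zero' hb),
    finsum_eq_sum_of_support_subset _ (s := range (n + 1))]
  · rfl
  · intro k hk
    by_contra hkn
    simp only [coe_range, Set.mem_Iio, not_lt] at hkn
    exact hk (by simp only [coeff_pow_eq_zero_of_lt hb (by omega : n < k), smul_zero])

lemma constantCoeff_subst_eq {f b : R⟦X⟧} (hb : constantCoeff b = 0) :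
    constantCoeff (f.subst b) = constantCoeff f := by
  simpa using coeff_subst_eq_sum_range (f := f) hb 0

lemma coeff_one_add_C_mul_X_mul_derivative (c : R) (f : R⟦X⟧) (n : ℕ) :
    coeff n ((1 + C c * X) * d⁄dX R f) = (n + 1) * coeff (n + 1) f + c * n * coeff n f := by
  rw [add_mul, one_mul, map_add, coeff_derivative, mul_assoc, coeff_C_mul]
  cases n with
  | zero => simp [coeff_zero_eq_constantCoeff]
  | succ n =>
    rw [coeff_succ_X_mul, coeff_derivative]
    push_cast
    ring

end PowerSeriesFacts

lemma eq_zero_of_one_add_X_mul_derivative_eq_self {K : Type*} [Field K] [CharZero K]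
    {f : K⟦X⟧} (hf : constantCoeff f = 0) (hode : (1 + X) * d⁄dX K f = f) : f = 0 := by
  ext n
  induction n with
  | zero => simpa using hf
  | succ n ih =>
    have h := congrArg (coeff n) hode
    rw [show (1 : K⟦X⟧) + X = 1 + C 1 * X by simp, coeff_one_add_C_mul_X_mul_derivative, ih,
      map_zero] at h
    simpa [Nat.cast_add_one_ne_zero] using h

lemma coeff_degExp (l x : ℝ) (n : ℕ) : coeff n (degExp l x) = dfall l x n / n ! := by
  simp [degExp]

lemma coeff_succ_degLog (l : ℝ) (n : ℕ) :
    coeff (n + 1) (degLog l) = (∏ j ∈ range n, (l - (j + 1))) / (n + 1)! := by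
  simp [degLog]

lemma constantCoeff_degLog (l : ℝ) : constantCoeff (degLog l) = 0 := by
  simp [degLog]

lemma dfall_succ (l x : ℝ) (n : ℕ) : dfall l x (n + 1) = dfall l x n * (x - n * l) := by
  simp [dfall, prod_range_succ]

lemma one_add_C_mul_X_mul_derivative_degExp (l x : ℝ) :
    (1 + C l * X) * d⁄dX ℝ (degExp l x) = C x * degExp l x := by
  ext n
  rw [coeff_one_add_C_mul_X_mul_derivative, coeff_C_mul]
  simp only [coeff_degExp, dfall_succ, factorial_succ]
  have h : ((n + 1) * n ! : ℕ) ≠ 0 := by positivity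
  field_simp
  push_cast
  ring

lemma one_add_X_mul_derivative_degLog (l : ℝ) :
    (1 + X) * d⁄dX ℝ (degLog l) = C l * degLog l + 1 := by
  ext n
  rw [show (1 : ℝ⟦X⟧) + X = 1 + C 1 * X by simp, coeff_one_add_C_mul_X_mul_derivative, map_add,
    coeff_C_mul]
  cases n with
  | zero => simp [degLog]
  | succ n =>
    rw [coeff_one, if_neg (by omega), coeff_succ_degLog, coeff_succ_degLog, prod_range_succ,
      factorial_succ (n + 1)]
    have h1 : ((n + 1)! : ℝ) ≠ 0 := by positivity
    have h2 : ((n + 1 : ℕ) + 1 : ℝ) ≠ 0 := by positivity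
    push_cast
    field_simp
    ring

lemma degExp_subst_degLog (l : ℝ) : (degExp l 1).subst (degLog l) = 1 + X := by
  set L := degLog l with hLdef
  set G : ℝ⟦X⟧ := (degExp l 1).subst L
  have hL : HasSubst L := HasSubst.of_constantCoeff_zero' (constantCoeff_degLog l)
  have hE : (1 + C l * L) * (d⁄dX ℝ (degExp l 1)).subst L = G := by
    have h := congrArg (substAlgHom hL) (one_add_C_mul_X_mul_derivative_degExp l 1)
    simpa only [map_mul, map_add, map_one, one_mul, ← algebraMap_eq, AlgHom.commutes,
      substAlgHom_X, coe_substAlgHom] using h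
  have hunit : (1 + C l * L) ≠ 0 := fun h => by
    simpa [hLdef, constantCoeff_degLog] using congrArg constantCoeff h
  have hG : (1 + X) * d⁄dX ℝ G = G := by
    refine mul_left_cancel₀ hunit ?_
    calc (1 + C l * L) * ((1 + X) * d⁄dX ℝ G)
        = ((1 + C l * L) * (d⁄dX ℝ (degExp l 1)).subst L) * ((1 + X) * d⁄dX ℝ L) := by
          rw [derivative_subst hL]; ring
      _ = (1 + C l * L) * G := by rw [hE, one_add_X_mul_derivative_degLog]; ring
  have hconst : constantCoeff (G - (1 + X)) = 0 := by
    rw [map_sub, constantCoeff_subst_eq (constantCoeff_degLog l)]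
    simp [degExp, dfall]
  have hode : (1 + X) * d⁄dX ℝ (G - (1 + X)) = G - (1 + X) := by
    rw [map_sub, mul_sub, hG]; simp
  exact sub_eq_zero.mp (eq_zero_of_one_add_X_mul_derivative_eq_self hconst hode)

lemma sum_coeff_pow_degExp_mul_coeff_pow_degLog (l : ℝ) (i j : ℕ) :
    ∑ k ∈ range (j + 1), coeff k ((degExp l 1 - 1) ^ i) * coeff j (degLog l ^ k) =
      if j = i then 1 else 0 := by
  have hL : HasSubst (degLog l) := HasSubst.of_constantCoeff_zero' (constantCoeff_degLog l)
  have hcomp : ((degExp l 1 - 1) ^ i).subst (degLog l) = (X : ℝ⟦X⟧) ^ i := by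
    rw [subst_pow hL, subst_sub hL, degExp_subst_degLog, ← map_one (C (R := ℝ)), subst_C]
    simp
  rw [← coeff_subst_eq_sum_range (constantCoeff_degLog l), hcomp, coeff_X_pow]

lemma dS2_eq_zero_of_lt (l : ℝ) {n k : ℕ} (h : n < k) : dS2 l n k = 0 := by
  rw [dS2, coeff_pow_eq_zero_of_lt (by simp [degExp, dfall]) h, mul_zero]

lemma sum_dS1_mul_dS2 (l : ℝ) (i j : ℕ) :
    ∑ k ∈ range (j + 1), dS1 l j k * dS2 l k i = if j = i then 1 else 0 := by
  calc ∑ k ∈ range (j + 1), dS1 l j k * dS2 l k i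
      = (j ! / i ! : ℝ) *
          ∑ k ∈ range (j + 1), coeff k ((degExp l 1 - 1) ^ i) * coeff j (degLog l ^ k) := by
        rw [mul_sum]
        refine sum_congr rfl fun k _ => ?_
        have hk : (k ! : ℝ) ≠ 0 := by positivity
        simp only [dS1, dS2]
        field_simp
    _ = if j = i then 1 else 0 := by
        rw [sum_coeff_pow_degExp_mul_coeff_pow_degLog]
        split_ifs with h
        · rw [h, div_self (by positivity), mul_one]
        · rw [mul_zero]

lemma dBell_eq_sum_range_of_le (l : ℝ) {k j : ℕ} (h : k ≤ j) (x : ℝ) :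
    dBell l k x = ∑ i ∈ range (j + 1), dS2 l k i * dfall l x i := by
  refine sum_subset (range_subset_range.mpr (by omega)) fun i _ hi => ?_
  rw [dS2_eq_zero_of_lt l (by simpa using hi), zero_mul]

lemma sum_dS1_mul_dBell (l x : ℝ) (j : ℕ) :
    ∑ k ∈ range (j + 1), dS1 l j k * dBell l k x = dfall l x j := by
  calc ∑ k ∈ range (j + 1), dS1 l j k * dBell l k x
      = ∑ k ∈ range (j + 1), ∑ i ∈ range (j + 1), dS1 l j k * dS2 l k i * dfall l x i := by
        refine sum_congr rfl fun k hk => ?_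
        rw [dBell_eq_sum_range_of_le l (by simpa [Nat.lt_succ_iff] using hk), mul_sum]
        simp only [mul_assoc]
    _ = ∑ i ∈ range (j + 1), (∑ k ∈ range (j + 1), dS1 l j k * dS2 l k i) * dfall l x i := by
        rw [sum_comm]
        simp only [sum_mul]
    _ = dfall l x j := by simp [sum_dS1_mul_dS2]

theorem stmt12_general (l : ℝ) (m : ℕ) (n : ℕ) (x : ℝ) :
    dDowling m l n x =
      ∑ k ∈ range (n + 1), (∑ j ∈ Icc k n, dS1 l j k * dW m l n j) * dBell l k x := by
  calc dDowling m l n x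
      = ∑ j ∈ Ico 0 (n + 1), ∑ k ∈ Ico 0 (j + 1), dW m l n j * (dS1 l j k * dBell l k x) := by
        simp only [dDowling, ← range_eq_Ico, ← mul_sum, sum_dS1_mul_dBell]
    _ = ∑ k ∈ range (n + 1), (∑ j ∈ Icc k n, dS1 l j k * dW m l n j) * dBell l k x := by
        rw [← sum_Ico_Ico_comm, range_eq_Ico]
        refine sum_congr rfl fun k _ => ?_
        rw [← Finset.Ico_add_one_right_eq_Icc, sum_mul]
        exact sum_congr rfl fun j _ => by ring

theorem stmt12 (l : ℝ) (hl : l ≠ 0) (m : ℕ) (hm : 0 < m) (n : ℕ) (x : ℝ) :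
    dDowling m l n x =
      ∑ k ∈ range (n + 1), (∑ j ∈ Icc k n, dS1 l j k * dW m l n j) * dBell l k x :=
  stmt12_general l m n x

end
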